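/- arXiv:1704.05653 — 4 statements merged into one kernel-verified Lean document; each statement's English description precedes it below -/
import Mathlib

section
/- Let Br : ℝ × ℝ → [a,b] satisfy the Lipschitz conditions |Br(z,α) − Br(z',α)| ≤ L_z|z−z'| with L_z < 1 and |Br(z,α) − Br(z,α')| ≤ L|α−α'|. Let ν ∼ P and ν̂ₙ ∼ Pₙ be independent random variables, where Pₙ is the empirical distribution of α₁,...,αₙ. Let z* solve z = E_ν[Br(z,ν)] and ẑₙ solve z = (1/n)∑ᵢ Br(z, αᵢ). Then |ẑₙ − z*| ≤ (L/(1−L_z))·E[|ν − ν̂ₙ|]. -/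
/-!
Averaging the samples turns `z ↦ (1/n) ∑ᵢ Br(z, αᵢ)` into an `L_z`-contraction with fixed point
`ẑₙ`, so `|ẑₙ − z*| ≤ |z* − (1/n) ∑ᵢ Br(z*, αᵢ)| / (1 − L_z)`. Since `z* = E Br(z*, ν)`, this
defect is a difference of means of the `L`-Lipschitz function `Br(z*, ·)` under `P` and under
`Pₙ`, which is at most `L · (1/n) ∑ᵢ E|ν − αᵢ|`.
-/

open MeasureTheory Finset
open scoped NNReal BigOperators

lemma Fintype.one_div_card_mul_sum_eq_expect {ι K : Type*} [Fintype ι] [Semifield K]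
    [CharZero K] (f : ι → K) :
    1 / (Fintype.card ι : K) * ∑ i, f i = 𝔼 i, f i := by
  rw [Fintype.expect_eq_sum_div_card, one_div_mul_eq_div]

lemma LipschitzWith.expect {ι X : Type*} [Fintype ι] [Nonempty ι] [PseudoMetricSpace X]
    {K : ℝ≥0} {f : ι → X → ℝ} (hf : ∀ i, LipschitzWith K (f i)) :
    LipschitzWith K (fun x => 𝔼 i, f i x) := by
  refine LipschitzWith.of_dist_le_mul fun x y => ?_
  calc dist (𝔼 i, f i x) (𝔼 i, f i y)
      = |𝔼 i, (f i x - f i y)| := by rw [Real.dist_eq, expect_sub_distrib]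
    _ ≤ 𝔼 i, |f i x - f i y| := abs_expect_le _ _
    _ ≤ 𝔼 _i : ι, K * dist x y :=
        expect_le_expect fun i _ => by simpa only [Real.dist_eq] using (hf i).dist_le_mul x y
    _ = K * dist x y := Fintype.expect_const _

section Integral

variable {X : Type*} [PseudoMetricSpace X] [MeasurableSpace X]
  {μ : Measure X} [IsProbabilityMeasure μ] {f : X → ℝ} {L : ℝ}

lemma abs_sub_integral_le_of_lipschitz (hf : AEStronglyMeasurable f μ)
    (hLip : ∀ x y, |f x - f y| ≤ L * dist x y) (a : X)
    (hint : Integrable (fun x => dist x a) μ) :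
    |f a - ∫ x, f x ∂μ| ≤ L * ∫ x, dist x a ∂μ := by
  have hbound : ∀ x, |f a - f x| ≤ L * dist x a := fun x => by
    rw [dist_comm]; exact hLip a x
  have hdiff : Integrable (fun x => f a - f x) μ :=
    (hint.const_mul L).mono' ((aestronglyMeasurable_const).sub hf) (ae_of_all _ hbound)
  have hfint : Integrable f μ :=
    ((integrable_const (f a)).sub hdiff).congr (ae_of_all _ fun x => sub_sub_cancel _ _)
  calc |f a - ∫ x, f x ∂μ|
      = |∫ x, (f a - f x) ∂μ| := by
        rw [integral_sub (integrable_const _) hfint, integral_const, probReal_univ, one_smul]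
    _ ≤ ∫ x, |f a - f x| ∂μ := abs_integral_le_integral_abs
    _ ≤ ∫ x, L * dist x a ∂μ :=
        integral_mono_of_nonneg (ae_of_all _ fun _ => abs_nonneg _) (hint.const_mul L)
          (ae_of_all _ hbound)
    _ = L * ∫ x, dist x a ∂μ := integral_const_mul L _

lemma abs_integral_sub_expect_le_of_lipschitz {ι : Type*} [Fintype ι] [Nonempty ι]
    (hf : AEStronglyMeasurable f μ) (hLip : ∀ x y, |f x - f y| ≤ L * dist x y) (a : ι → X)
    (hint : ∀ i, Integrable (fun x => dist x (a i)) μ) :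
    |∫ x, f x ∂μ - 𝔼 i, f (a i)| ≤ L * 𝔼 i, ∫ x, dist x (a i) ∂μ := by
  calc |∫ x, f x ∂μ - 𝔼 i, f (a i)|
      = |𝔼 i, (f (a i) - ∫ x, f x ∂μ)| := by
        rw [expect_sub_distrib, Fintype.expect_const, abs_sub_comm]
    _ ≤ 𝔼 i, |f (a i) - ∫ x, f x ∂μ| := abs_expect_le _ _
    _ ≤ 𝔼 i, L * ∫ x, dist x (a i) ∂μ :=
        expect_le_expect fun i _ => abs_sub_integral_le_of_lipschitz hf hLip (a i) (hint i)
    _ = L * 𝔼 i, ∫ x, dist x (a i) ∂μ := (mul_expect _ _ _).symm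

end Integral

theorem empirical_AEM_error_general
    (Lz L : ℝ) (Br : ℝ → ℝ → ℝ)
    (hLz0 : 0 ≤ Lz) (hLz1 : Lz < 1)
    (hLipz : ∀ z z' α, |Br z α - Br z' α| ≤ Lz * |z - z'|)
    (hLipα : ∀ z α α', |Br z α - Br z α'| ≤ L * |α - α'|)
    (μ : Measure ℝ) [IsProbabilityMeasure μ]
    (hmeas : ∀ z, Measurable (fun α => Br z α))
    (n : ℕ) (hn : 1 ≤ n) (α : Fin n → ℝ)
    (hint : ∀ i, Integrable (fun x => |x - α i|) μ)
    (zstar zhat : ℝ)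
    (hzstar : zstar = ∫ x, Br zstar x ∂μ)
    (hzhat : zhat = (1 / (n : ℝ)) * ∑ i, Br zhat (α i)) :
    |zhat - zstar| ≤ (L / (1 - Lz)) * ((1 / (n : ℝ)) * ∑ i, ∫ x, |x - α i| ∂μ) := by
  have : Nonempty (Fin n) := ⟨⟨0, hn⟩⟩
  have hexpect (f : Fin n → ℝ) : 1 / (n : ℝ) * ∑ i, f i = 𝔼 i, f i := by
    simpa using Fintype.one_div_card_mul_sum_eq_expect f
  rw [hexpect] at hzhat ⊢
  have hcontr : ContractingWith ⟨Lz, hLz0⟩ (fun z => 𝔼 i, Br z (α i)) :=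
    ⟨hLz1, LipschitzWith.expect fun i =>
      LipschitzWith.of_dist_le_mul fun z z' => hLipz z z' (α i)⟩
  have hdefect : dist zstar (𝔼 i, Br zstar (α i)) ≤ L * 𝔼 i, ∫ x, |x - α i| ∂μ := by
    rw [Real.dist_eq]
    nth_rewrite 1 [hzstar]
    simpa only [Real.dist_eq] using abs_integral_sub_expect_le_of_lipschitz (hmeas zstar).aestronglyMeasurable
      (hLipα zstar) α hint
  calc |zhat - zstar| = dist zstar zhat := by rw [dist_comm, Real.dist_eq]
    _ ≤ dist zstar (𝔼 i, Br zstar (α i)) / (1 - Lz) :=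
        hcontr.dist_le_of_fixedPoint zstar hzhat.symm
    _ ≤ L * (𝔼 i, ∫ x, |x - α i| ∂μ) / (1 - Lz) := by gcongr
    _ = L / (1 - Lz) * 𝔼 i, ∫ x, |x - α i| ∂μ := div_mul_eq_mul_div _ _ _ |>.symm

/-- Error bound for the empirical-distribution-based approximation of the AEM:
`|ẑₙ − z*| ≤ (L/(1−L_z)) · E[|ν − ν̂ₙ|]`, where `ν ∼ P` and `ν̂ₙ ∼ Pₙ` are independent,
so that `E[|ν − ν̂ₙ|] = (1/n) ∑ᵢ E_ν[|ν − αᵢ|]`. -/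
theorem empirical_AEM_error
    (a b Lz L : ℝ) (Br : ℝ → ℝ → ℝ)
    (hrange : ∀ z α, Br z α ∈ Set.Icc a b)
    (hLz0 : 0 ≤ Lz) (hLz1 : Lz < 1) (hL0 : 0 ≤ L)
    (hLipz : ∀ z z' α, |Br z α - Br z' α| ≤ Lz * |z - z'|)
    (hLipα : ∀ z α α', |Br z α - Br z α'| ≤ L * |α - α'|)
    (μ : Measure ℝ) [IsProbabilityMeasure μ]
    (hmeas : ∀ z, Measurable (fun α => Br z α))
    (n : ℕ) (hn : 1 ≤ n) (α : Fin n → ℝ)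
    (hint : ∀ i, Integrable (fun x => |x - α i|) μ)
    (zstar zhat : ℝ)
    (hzstar : zstar = ∫ x, Br zstar x ∂μ)
    (hzhat : zhat = (1 / (n : ℝ)) * ∑ i, Br zhat (α i)) :
    |zhat - zstar| ≤ (L / (1 - Lz)) * ((1 / (n : ℝ)) * ∑ i, ∫ x, |x - α i| ∂μ) :=
  empirical_AEM_error_general Lz L Br hLz0 hLz1 hLipz hLipα μ hmeas n hn α hint zstar zhat hzstar
    hzhat
end

section
/- Consider the n-player game where agent i has parameter αᵢ, action space [a,b], and best response Br(z,α) with Lipschitz constant L_z < 1 in z. Let (z*ᵢ,ₙ)ᵢ be the equilibrium mean variables, i.e., z*ᵢ,ₙ = (1/(n-1))∑_{j≠i} Br(z*ⱼ,ₙ, αⱼ), and let ẑₙ be the unique solution of z = (1/n)∑ⱼ Br(z, αⱼ). Then max_{1≤i≤n} |ẑₙ − z*ᵢ,ₙ| ≤ (2·max(|a|,|b|)/(1−L_z))·(L_z/(n−1) + 1/n), and hence this maximum is O(1/n). -/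
open Finset

/-- The empirical approximation `ẑₙ` is uniformly `O(1/n)`-close to all equilibrium
mean variables:
`max_i |ẑₙ − z*ᵢ,ₙ| ≤ (2·max(|a|,|b|)/(1−L_z))·(L_z/(n−1) + 1/n)`. -/
theorem empirical_AEM_uniform_bound
    (a b Lz : ℝ) (Br : ℝ → ℝ → ℝ)
    (hrange : ∀ z α, Br z α ∈ Set.Icc a b)
    (hLz0 : 0 ≤ Lz) (hLz1 : Lz < 1)
    (hLipz : ∀ z z' α, |Br z α - Br z' α| ≤ Lz * |z - z'|)
    (n : ℕ) (hn : 2 ≤ n) (α : Fin n → ℝ)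
    (zstar : Fin n → ℝ)
    (hzstar : ∀ i, zstar i =
      (1 / ((n : ℝ) - 1)) * ∑ j ∈ univ.erase i, Br (zstar j) (α j))
    (zhat : ℝ)
    (hzhat : zhat = (1 / (n : ℝ)) * ∑ j, Br zhat (α j)) :
    ∀ i, |zhat - zstar i| ≤
      (2 * max |a| |b| / (1 - Lz)) * (Lz / ((n : ℝ) - 1) + 1 / (n : ℝ)) := by
  set M := max |a| |b| with hM
  have hM0 : 0 ≤ M := le_trans (abs_nonneg a) (le_max_left _ _)
  have hBr : ∀ z c, |Br z c| ≤ M := by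
    intro z c
    rcases hrange z c with ⟨h1, h2⟩
    rw [abs_le]
    constructor
    · have := neg_abs_le a
      have := le_max_left |a| |b|
      linarith
    · have := le_abs_self b
      have := le_max_right |a| |b|
      linarith
  have hN2 : (2:ℝ) ≤ (n:ℝ) := by exact_mod_cast hn
  have hN0 : (0:ℝ) < (n:ℝ) := by linarith
  have hN1 : (0:ℝ) < (n:ℝ) - 1 := by linarith
  have hne : (univ : Finset (Fin n)).Nonempty := by
    have : 0 < n := by omega
    exact ⟨⟨0, this⟩, mem_univ _⟩
  set D := (univ : Finset (Fin n)).sup' hne (fun j => |zhat - zstar j|) with hDdef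
  have hDle : ∀ j, |zhat - zstar j| ≤ D := fun j =>
    Finset.le_sup' (fun j => |zhat - zstar j|) (mem_univ j)
  have hD0 : 0 ≤ D := le_trans (abs_nonneg _) (hDle ⟨0, by omega⟩)
  have hcard : ∀ i : Fin n, ((univ.erase i).card : ℝ) = (n:ℝ) - 1 := by
    intro i
    rw [card_erase_of_mem (mem_univ i), card_univ, Fintype.card_fin,
      Nat.cast_sub (by omega)]
    simp
  have key : ∀ i, |zhat - zstar i| ≤ 2*M/(n:ℝ) + Lz * D := by
    intro i
    set f : Fin n → ℝ := fun j => Br zhat (α j) with hf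
    set g : Fin n → ℝ := fun j => Br (zstar j) (α j) with hg
    set Sf := ∑ j ∈ univ.erase i, f j with hSf
    set Sg := ∑ j ∈ univ.erase i, g j with hSg
    have hsplit : (∑ j, f j) = Sf + f i := by
      rw [hSf, Finset.sum_erase_add _ _ (mem_univ i)]
    have hzh : zhat = (1/(n:ℝ)) * (Sf + f i) := by rw [hzhat, hsplit]
    have hzs : zstar i = (1/((n:ℝ)-1)) * Sg := hzstar i
    have hdecomp : zhat - zstar i =
        ((1/(n:ℝ)) * f i - (1/((n:ℝ)*((n:ℝ)-1))) * Sf)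
        + (1/((n:ℝ)-1)) * (Sf - Sg) := by
      rw [hzh, hzs]
      field_simp
      ring
    have hSfb : |Sf| ≤ ((n:ℝ)-1) * M := by
      calc |Sf| ≤ ∑ j ∈ univ.erase i, |f j| := Finset.abs_sum_le_sum_abs _ _
        _ ≤ ∑ _j ∈ univ.erase i, M := Finset.sum_le_sum (fun j _ => hBr _ _)
        _ = ((n:ℝ)-1) * M := by rw [Finset.sum_const, nsmul_eq_mul, hcard i]
    have hdiffb : |Sf - Sg| ≤ ((n:ℝ)-1) * (Lz * D) := by
      rw [hSf, hSg, ← Finset.sum_sub_distrib]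
      calc |∑ j ∈ univ.erase i, (f j - g j)|
          ≤ ∑ j ∈ univ.erase i, |f j - g j| := Finset.abs_sum_le_sum_abs _ _
        _ ≤ ∑ _j ∈ univ.erase i, Lz * D := by
            refine Finset.sum_le_sum (fun j _ => ?_)
            calc |f j - g j| ≤ Lz * |zhat - zstar j| := hLipz _ _ _
              _ ≤ Lz * D := by
                  exact mul_le_mul_of_nonneg_left (hDle j) hLz0
        _ = ((n:ℝ)-1) * (Lz * D) := by
            rw [Finset.sum_const, nsmul_eq_mul, hcard i]
    have hfib : |f i| ≤ M := hBr _ _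
    calc |zhat - zstar i|
        ≤ |(1/(n:ℝ)) * f i - (1/((n:ℝ)*((n:ℝ)-1))) * Sf|
          + |(1/((n:ℝ)-1)) * (Sf - Sg)| := by
          rw [hdecomp]; exact abs_add_le _ _
      _ ≤ ((1/(n:ℝ)) * |f i| + (1/((n:ℝ)*((n:ℝ)-1))) * |Sf|)
          + (1/((n:ℝ)-1)) * |Sf - Sg| := by
          gcongr
          · calc |(1/(n:ℝ)) * f i - (1/((n:ℝ)*((n:ℝ)-1))) * Sf|
                ≤ |(1/(n:ℝ)) * f i| + |(1/((n:ℝ)*((n:ℝ)-1))) * Sf| := abs_sub _ _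
              _ = (1/(n:ℝ)) * |f i| + (1/((n:ℝ)*((n:ℝ)-1))) * |Sf| := by
                  have e1 : |(1/(n:ℝ))| = 1/(n:ℝ) := abs_of_pos (by positivity)
                  have e2 : |(1/((n:ℝ)*((n:ℝ)-1)))| = 1/((n:ℝ)*((n:ℝ)-1)) :=
                    abs_of_pos (by positivity)
                  rw [abs_mul, abs_mul, e1, e2]
          · rw [abs_mul, abs_of_pos (by positivity)]
      _ ≤ ((1/(n:ℝ)) * M + (1/((n:ℝ)*((n:ℝ)-1))) * (((n:ℝ)-1)*M))
          + (1/((n:ℝ)-1)) * (((n:ℝ)-1) * (Lz * D)) := by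
          gcongr <;> positivity
      _ = 2*M/(n:ℝ) + Lz * D := by field_simp; ring
  have hDkey : D ≤ 2*M/(n:ℝ) + Lz * D := Finset.sup'_le hne _ (fun i _ => key i)
  have hDbound : D ≤ 2*M/((n:ℝ)*(1-Lz)) := by
    rw [div_mul_eq_div_div]
    rw [le_div_iff₀ (by linarith)]
    nlinarith [hDkey, hN0]
  intro i
  calc |zhat - zstar i| ≤ D := hDle i
    _ ≤ 2*M/((n:ℝ)*(1-Lz)) := hDbound
    _ ≤ (2 * M / (1 - Lz)) * (Lz / ((n : ℝ) - 1) + 1 / (n : ℝ)) := by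
        have h1 : 0 ≤ Lz / ((n:ℝ)-1) := by positivity
        have h2 : 2*M/((n:ℝ)*(1-Lz)) = (2*M/(1-Lz)) * (1/(n:ℝ)) := by
          field_simp
        rw [h2]
        have h3 : 0 ≤ 2*M/(1-Lz) := div_nonneg (by linarith) (by linarith)
        nlinarith
end

section
/- Suppose the empirical distributions Pₙ of the deterministic parameters (αᵢ) converge pointwise to a continuous distribution function P, and Br : ℝ × ℝ → [a,b] is Lipschitz in z with constant L_z < 1 and Lipschitz in α with constant L. Let z*ᵢ,ₙ denote the equilibrium mean variable of agent i in the n-player game and z*_AEM the unique solution of z = ∫ Br(z,α) dP(α). Then lim_{n→∞} sup_{1≤i≤n} |z*ᵢ,ₙ − z*_AEM| = 0. -/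
/-!
Averages over the empirical distribution of the `α j` converge to `μ`-integrals for every bounded
uniformly continuous function: on a fine grid of a large interval `(-T, T]` such a function is
uniformly close to a step function, whose integral is a Riemann–Stieltjes sum of the distribution
function, and convergence of the distribution functions controls both this sum and the mass
outside `(-T, T]`. Applied to `Br zAEM`, the mean of `Br zAEM (α j)` over `j ≠ i` tends to `zAEM`
uniformly in `i`, the omitted term costing `O(1/n)`. Comparing with the equilibrium equation, the
`Lz`-contraction in `z` bounds `sup_i |z*ᵢ,ₙ - zAEM|` by that deviation divided by `1 - Lz`.
-/

open MeasureTheory Finset Filter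

open scoped NNReal Topology

theorem tendsto_of_forall_approx {ι : Type*} {l : Filter ι} {x : ι → ℝ} {x₀ : ℝ}
    (h : ∀ ε > 0, ∃ (y b : ι → ℝ) (y₀ b₀ : ℝ), Tendsto y l (𝓝 y₀) ∧ Tendsto b l (𝓝 b₀) ∧
      (∀ i, |x i - y i| ≤ b i) ∧ |x₀ - y₀| ≤ b₀ ∧ b₀ < ε) :
    Tendsto x l (𝓝 x₀) := by
  refine Metric.tendsto_nhds.2 fun ε hε => ?_
  obtain ⟨y, b, y₀, b₀, hy, hb, hxy, hxy₀, hb₀⟩ := h (ε / 4) (by positivity)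
  filter_upwards [Metric.tendsto_nhds.1 hy (ε / 4) (by positivity),
    hb.eventually_lt_const (show b₀ < b₀ + ε / 4 by linarith)] with i hyi hbi
  rw [Real.dist_eq] at hyi ⊢
  have := abs_sub_le (x i) (y i) x₀
  have := abs_sub_le (y i) y₀ x₀
  rw [abs_sub_comm] at hxy₀
  linarith [hxy i]

theorem exists_lt_mem_Ioc_succ {α : Type*} [LinearOrder α] (t : ℕ → α) {x : α} :
    ∀ {k : ℕ}, x ∈ Set.Ioc (t 0) (t k) → ∃ m < k, x ∈ Set.Ioc (t m) (t (m + 1))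
  | 0, hx => absurd hx.2 (not_le.2 hx.1)
  | k + 1, hx => by
    by_cases hxk : x ≤ t k
    · obtain ⟨m, hm, hxm⟩ := exists_lt_mem_Ioc_succ t ⟨hx.1, hxk⟩
      exact ⟨m, hm.trans k.lt_succ_self, hxm⟩
    · exact ⟨k, k.lt_succ_self, not_le.1 hxk, hx.2⟩

theorem measureReal_Ioc_eq_sub (μ : Measure ℝ) [IsFiniteMeasure μ] {a b : ℝ} (hab : a ≤ b) :
    μ.real (Set.Ioc a b) = μ.real (Set.Iic b) - μ.real (Set.Iic a) := by
  rw [← measureReal_sdiff (Set.Iic_subset_Iic.2 hab) measurableSet_Iic]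
  congr 1
  ext x
  simp [and_comm]

theorem tendsto_measureReal_compl_Ioc_neg (μ : Measure ℝ) [IsFiniteMeasure μ] :
    Tendsto (fun T => μ.real (Set.Ioc (-T) T)ᶜ) atTop (𝓝 0) := by
  have hanti : Antitone fun T : ℝ => (Set.Ioc (-T) T)ᶜ := fun T T' h =>
    Set.compl_subset_compl.2 (Set.Ioc_subset_Ioc (neg_le_neg h) h)
  have hempty : ⋂ T : ℝ, (Set.Ioc (-T) T)ᶜ = ∅ := by
    refine Set.eq_empty_of_forall_notMem fun x hx => ?_
    refine Set.mem_iInter.1 hx (|x| + 1) ⟨?_, ?_⟩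
    · linarith [neg_abs_le x]
    · linarith [le_abs_self x]
  have h := tendsto_measure_iInter_atTop
    (fun T => measurableSet_Ioc.compl.nullMeasurableSet) hanti ⟨0, measure_ne_top μ _⟩
  rw [hempty, measure_empty] at h
  simpa [Function.comp_def, measureReal_def] using
    (ENNReal.tendsto_toReal ENNReal.zero_ne_top).comp h

theorem exists_monotone_grid {a b δ : ℝ} (hab : a ≤ b) (hδ : 0 < δ) :
    ∃ (t : ℕ → ℝ) (k : ℕ), Monotone t ∧ t 0 = a ∧ t k = b ∧ ∀ m, t (m + 1) - t m < δ := by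
  obtain ⟨k, hk⟩ := exists_nat_gt ((b - a) / δ)
  have hk0 : (0 : ℝ) < k := lt_of_le_of_lt (div_nonneg (sub_nonneg.2 hab) hδ.le) hk
  refine ⟨fun m => a + m * ((b - a) / k), k, fun m m' h => ?_, by simp, ?_, fun m => ?_⟩
  · have : 0 ≤ b - a := sub_nonneg.2 hab
    dsimp only
    gcongr
  · field_simp
    ring
  · rw [div_lt_iff₀ hδ] at hk
    have : (b - a) / k < δ := by rw [div_lt_iff₀ hk0]; linarith
    push_cast
    linarith

noncomputable def stieltjesSum (f F : ℝ → ℝ) (t : ℕ → ℝ) (k : ℕ) : ℝ :=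
  ∑ m ∈ range k, f (t (m + 1)) * (F (t (m + 1)) - F (t m))

noncomputable def stepFunction (f : ℝ → ℝ) (t : ℕ → ℝ) (k : ℕ) (x : ℝ) : ℝ :=
  ∑ m ∈ range k, (Set.Ioc (t m) (t (m + 1))).indicator (fun _ => f (t (m + 1))) x

section StepFunction

variable {f : ℝ → ℝ} {t : ℕ → ℝ} {k : ℕ}

theorem stepFunction_eq_of_mem_Ioc (ht : Monotone t) {m : ℕ} (hm : m < k) {x : ℝ}
    (hx : x ∈ Set.Ioc (t m) (t (m + 1))) : stepFunction f t k x = f (t (m + 1)) := by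
  rw [stepFunction, sum_eq_single_of_mem m (mem_range.2 hm)]
  · exact Set.indicator_of_mem hx _
  · exact fun m' _ hm' => Set.indicator_of_notMem
      (Set.disjoint_right.1 (ht.pairwise_disjoint_on_Ioc_succ hm') hx) _

theorem stepFunction_eq_zero (ht : Monotone t) {x : ℝ} (hx : x ∉ Set.Ioc (t 0) (t k)) :
    stepFunction f t k x = 0 :=
  sum_eq_zero fun m hm => Set.indicator_of_notMem (fun hxm => hx <|
    Set.Ioc_subset_Ioc (ht m.zero_le) (ht (mem_range.1 hm)) hxm) _

theorem abs_sub_stepFunction_le (ht : Monotone t) {ε C : ℝ} (hC : ∀ x, |f x| ≤ C)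
    (hosc : ∀ m < k, ∀ x ∈ Set.Ioc (t m) (t (m + 1)), |f x - f (t (m + 1))| ≤ ε) (x : ℝ) :
    |f x - stepFunction f t k x| ≤ (Set.Ioc (t 0) (t k)).indicator (fun _ => ε) x
      + (Set.Ioc (t 0) (t k))ᶜ.indicator (fun _ => C) x := by
  by_cases hx : x ∈ Set.Ioc (t 0) (t k)
  · obtain ⟨m, hm, hxm⟩ := exists_lt_mem_Ioc_succ t hx
    rw [stepFunction_eq_of_mem_Ioc ht hm hxm, Set.indicator_of_mem hx,
      Set.indicator_of_notMem (Set.notMem_compl_iff.2 hx), add_zero]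
    exact hosc m hm x hxm
  · rw [stepFunction_eq_zero ht hx, Set.indicator_of_notMem hx,
      Set.indicator_of_mem (Set.mem_compl hx), zero_add, sub_zero]
    exact hC x

variable {ν : Measure ℝ} [IsFiniteMeasure ν]

theorem integral_stepFunction (ht : Monotone t) :
    ∫ x, stepFunction f t k x ∂ν = stieltjesSum f (fun s => ν.real (Set.Iic s)) t k := by
  unfold stepFunction stieltjesSum
  rw [integral_finsetSum _ fun m _ => (integrable_const _).indicator measurableSet_Ioc]
  refine sum_congr rfl fun m _ => ?_
  rw [integral_indicator_const _ measurableSet_Ioc, measureReal_Ioc_eq_sub ν (ht m.le_succ),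
    smul_eq_mul, mul_comm]

theorem abs_integral_sub_stieltjesSum_le (ht : Monotone t) (hfm : Measurable f) {ε C : ℝ}
    (hC : ∀ x, |f x| ≤ C)
    (hosc : ∀ m < k, ∀ x ∈ Set.Ioc (t m) (t (m + 1)), |f x - f (t (m + 1))| ≤ ε) :
    |∫ x, f x ∂ν - stieltjesSum f (fun s => ν.real (Set.Iic s)) t k|
      ≤ ν.real (Set.Ioc (t 0) (t k)) * ε + ν.real (Set.Ioc (t 0) (t k))ᶜ * C := by
  have hfi : Integrable f ν :=
    .of_bound hfm.aestronglyMeasurable C (ae_of_all _ hC)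
  have hgi : Integrable (stepFunction f t k) ν :=
    integrable_finsetSum _ fun m _ => (integrable_const _).indicator measurableSet_Ioc
  have hA : MeasurableSet (Set.Ioc (t 0) (t k)) := measurableSet_Ioc
  have hAi := (integrable_const ε).indicator (μ := ν) hA
  have hBi := (integrable_const C).indicator (μ := ν) hA.compl
  rw [← integral_stepFunction ht, ← integral_sub hfi hgi, ← Real.norm_eq_abs]
  refine (norm_integral_le_of_norm_le (hAi.add hBi) (ae_of_all _ fun x => ?_)).trans_eq ?_
  · simpa only [Real.norm_eq_abs, Pi.add_apply] using abs_sub_stepFunction_le ht hC hosc x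
  · rw [integral_add' hAi hBi, integral_indicator_const _ hA, integral_indicator_const _ hA.compl,
      smul_eq_mul, smul_eq_mul]

end StepFunction

theorem tendsto_integral_of_tendsto_measureReal_Iic {ι : Type*} {l : Filter ι}
    {ν : ι → Measure ℝ} [∀ i, IsFiniteMeasure (ν i)] {μ : Measure ℝ} [IsFiniteMeasure μ]
    (huniv : Tendsto (fun i => (ν i).real Set.univ) l (𝓝 (μ.real Set.univ)))
    (hIic : ∀ s, Tendsto (fun i => (ν i).real (Set.Iic s)) l (𝓝 (μ.real (Set.Iic s))))
    {f : ℝ → ℝ} {C : ℝ} (hC : ∀ x, |f x| ≤ C) (hf : UniformContinuous f) :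
    Tendsto (fun i => ∫ x, f x ∂ν i) l (𝓝 (∫ x, f x ∂μ)) := by
  refine tendsto_of_forall_approx fun ε hε => ?_
  set η := ε / (2 * (μ.real Set.univ + 1))
  have hη : 0 < η := by positivity
  have hμη : μ.real Set.univ * η < ε / 2 := by
    rw [mul_div_assoc', div_lt_div_iff₀ (by positivity) two_pos]
    nlinarith
  obtain ⟨δ, hδ, hfδ⟩ := Metric.uniformContinuous_iff.1 hf η hη
  obtain ⟨T, hT, hCT⟩ := ((eventually_ge_atTop 0).and
    (((tendsto_measureReal_compl_Ioc_neg μ).const_mul C).eventually_lt_const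
      (by rw [mul_zero]; positivity : C * 0 < ε / 2))).exists
  have hTT : -T ≤ T := by linarith
  obtain ⟨t, k, ht, ht0, htk, hmesh⟩ := exists_monotone_grid hTT hδ
  have hosc : ∀ m < k, ∀ x ∈ Set.Ioc (t m) (t (m + 1)), |f x - f (t (m + 1))| ≤ η := by
    intro m _ x hx
    refine (hfδ ?_).le
    rw [Real.dist_eq, abs_sub_comm, abs_of_nonneg (by linarith [hx.2])]
    linarith [hx.1, hmesh m]
  have happrox := fun (ρ : Measure ℝ) [IsFiniteMeasure ρ] =>
    abs_integral_sub_stieltjesSum_le (ν := ρ) ht hf.continuous.measurable hC hosc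
  simp only [ht0, htk] at happrox
  refine ⟨_, _, _, _, ?_, ?_, fun i => happrox (ν i), happrox μ, ?_⟩
  · exact tendsto_finsetSum _ fun m _ => ((hIic _).sub (hIic _)).const_mul _
  · simp only [measureReal_compl measurableSet_Ioc, measureReal_Ioc_eq_sub _ hTT]
    exact (((hIic T).sub (hIic (-T))).mul_const η).add
      ((huniv.sub ((hIic T).sub (hIic (-T)))).mul_const C)
  · have hA : μ.real (Set.Ioc (-T) T) ≤ μ.real Set.univ := measureReal_mono (Set.subset_univ _)
    nlinarith [mul_comm C (μ.real (Set.Ioc (-T) T)ᶜ)]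

noncomputable def empiricalMeasure {X : Type*} [MeasurableSpace X] (x : ℕ → X) (n : ℕ) :
    Measure X :=
  (n : ℝ≥0)⁻¹ • ∑ j ∈ range n, Measure.dirac (x j)

section EmpiricalMeasure

variable {X : Type*} [MeasurableSpace X] (x : ℕ → X) (n : ℕ)

instance : IsFiniteMeasure (empiricalMeasure x n) := by
  unfold empiricalMeasure; infer_instance

variable [MeasurableSingletonClass X]

theorem integral_empiricalMeasure (f : X → ℝ) :
    ∫ y, f y ∂empiricalMeasure x n = 1 / n * ∑ j ∈ range n, f (x j) := by
  rw [empiricalMeasure, integral_smul_nnreal_measure,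
    integral_finsetSum_measure fun j _ => integrable_dirac enorm_lt_top]
  simp [integral_dirac, NNReal.smul_def]

theorem empiricalMeasure_real_apply {s : Set X} [DecidablePred (· ∈ s)] (hs : MeasurableSet s) :
    (empiricalMeasure x n).real s = 1 / n * #{j ∈ range n | x j ∈ s} := by
  rw [← integral_indicator_one hs, integral_empiricalMeasure, ← sum_boole]
  simp only [Set.indicator_apply, Pi.one_apply]

theorem empiricalMeasure_real_univ (hn : n ≠ 0) : (empiricalMeasure x n).real Set.univ = 1 := by
  classical
  rw [empiricalMeasure_real_apply x n MeasurableSet.univ]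
  simp [hn]

end EmpiricalMeasure

theorem tendsto_average_of_tendsto_empiricalCDF {μ : Measure ℝ} [IsProbabilityMeasure μ]
    {α : ℕ → ℝ} (hconv : ∀ t : ℝ, Tendsto
      (fun n : ℕ => (1 / (n : ℝ)) * (((Finset.range n).filter (fun i => α i ≤ t)).card : ℝ))
      atTop (𝓝 ((μ (Set.Iic t)).toReal)))
    {f : ℝ → ℝ} {C : ℝ} (hC : ∀ x, |f x| ≤ C) (hf : UniformContinuous f) :
    Tendsto (fun n : ℕ => 1 / (n : ℝ) * ∑ j ∈ range n, f (α j)) atTop (𝓝 (∫ x, f x ∂μ)) := by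
  have huniv : Tendsto (fun n => (empiricalMeasure α n).real Set.univ) atTop
      (𝓝 (μ.real Set.univ)) := by
    rw [probReal_univ]
    exact tendsto_const_nhds.congr' <| (eventually_ne_atTop 0).mono fun n hn =>
      (empiricalMeasure_real_univ α n hn).symm
  have hIic (s : ℝ) : Tendsto (fun n => (empiricalMeasure α n).real (Set.Iic s)) atTop
      (𝓝 (μ.real (Set.Iic s))) := by
    simpa only [empiricalMeasure_real_apply α _ measurableSet_Iic, Set.mem_Iic, measureReal_def]
      using hconv s
  simpa only [integral_empiricalMeasure] using
    tendsto_integral_of_tendsto_measureReal_Iic huniv hIic hC hf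

noncomputable def leaveOneOutMean {n : ℕ} (y : Fin n → ℝ) (i : Fin n) : ℝ :=
  1 / ((n : ℝ) - 1) * ∑ j ∈ univ.erase i, y j

section LeaveOneOutMean

variable {n : ℕ} {y y' : Fin n → ℝ}

theorem card_univ_erase_fin (hn : 2 ≤ n) (i : Fin n) :
    ((univ.erase i).card : ℝ) = (n : ℝ) - 1 := by
  rw [card_erase_of_mem (mem_univ i), card_univ, Fintype.card_fin, Nat.cast_sub (by omega),
    Nat.cast_one]

theorem leaveOneOutMean_sub (i : Fin n) :
    leaveOneOutMean (y - y') i = leaveOneOutMean y i - leaveOneOutMean y' i := by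
  simp only [leaveOneOutMean, Pi.sub_apply, sum_sub_distrib, mul_sub]

theorem abs_leaveOneOutMean_le (hn : 2 ≤ n) (i : Fin n) {c : ℝ} (h : ∀ j, |y j| ≤ c) :
    |leaveOneOutMean y i| ≤ c := by
  have hn1 : (0 : ℝ) < n - 1 := sub_pos.2 (Nat.one_lt_cast.2 hn)
  rw [leaveOneOutMean, abs_mul, abs_of_pos (by positivity), one_div_mul_eq_div,
    div_le_iff₀ hn1]
  calc |∑ j ∈ univ.erase i, y j| ≤ ∑ j ∈ univ.erase i, |y j| := abs_sum_le_sum_abs _ _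
    _ ≤ (univ.erase i).card • c := sum_le_card_nsmul _ _ _ fun j _ => h j
    _ = c * (n - 1) := by rw [nsmul_eq_mul, card_univ_erase_fin hn i, mul_comm]

theorem leaveOneOutMean_sub_mean (hn : 2 ≤ n) (i : Fin n) :
    leaveOneOutMean y i - 1 / n * ∑ j, y j = 1 / n * leaveOneOutMean (fun j => y j - y i) i := by
  have hn1 : (n : ℝ) - 1 ≠ 0 := (sub_pos.2 (Nat.one_lt_cast.2 hn)).ne'
  have hn0 : (n : ℝ) ≠ 0 := by positivity
  rw [leaveOneOutMean, leaveOneOutMean, sum_sub_distrib, sum_const, nsmul_eq_mul,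
    card_univ_erase_fin hn i, ← sum_erase_add _ _ (mem_univ i)]
  field_simp
  ring

theorem abs_leaveOneOutMean_sub_mean_le (hn : 2 ≤ n) (i : Fin n) {a b : ℝ}
    (hy : ∀ j, y j ∈ Set.Icc a b) : |leaveOneOutMean y i - 1 / n * ∑ j, y j| ≤ (b - a) / n := by
  rw [leaveOneOutMean_sub_mean hn i, abs_mul, abs_of_pos (by positivity), one_div_mul_eq_div]
  refine div_le_div_of_nonneg_right (abs_leaveOneOutMean_le hn i fun j => ?_) (by positivity)
  exact abs_sub_le_iff.2 ⟨by linarith [(hy j).2, (hy i).1], by linarith [(hy j).1, (hy i).2]⟩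

end LeaveOneOutMean

theorem iSup_abs_sub_le_of_eq_leaveOneOutMean {n : ℕ} (hn : 2 ≤ n) {a b Lz : ℝ}
    {Br : ℝ → ℝ → ℝ} (hrange : ∀ z α, Br z α ∈ Set.Icc a b) (hLz0 : 0 ≤ Lz) (hLz1 : Lz < 1)
    (hLipz : ∀ z z' α, |Br z α - Br z' α| ≤ Lz * |z - z'|) {x β : Fin n → ℝ}
    (hx : ∀ i, x i = leaveOneOutMean (fun j => Br (x j) (β j)) i) (z : ℝ) :
    ⨆ i, |x i - z| ≤ (|1 / n * ∑ j, Br z (β j) - z| + (b - a) / n) / (1 - Lz) := by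
  have : Nonempty (Fin n) := ⟨⟨0, by omega⟩⟩
  set e := ⨆ i, |x i - z|
  have hxz (j : Fin n) : |x j - z| ≤ e :=
    le_ciSup (f := fun i => |x i - z|) (Finite.bddAbove_range _) j
  have he : e ≤ Lz * e + (|1 / n * ∑ j, Br z (β j) - z| + (b - a) / n) := by
    refine ciSup_le fun i => ?_
    have hcontr : |leaveOneOutMean (fun j => Br (x j) (β j)) i
        - leaveOneOutMean (fun j => Br z (β j)) i| ≤ Lz * e := by
      rw [← leaveOneOutMean_sub]
      exact abs_leaveOneOutMean_le hn i fun j =>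
        (hLipz _ _ _).trans (mul_le_mul_of_nonneg_left (hxz j) hLz0)
    have hmean :=
      abs_leaveOneOutMean_sub_mean_le hn i (y := fun j => Br z (β j)) fun j => hrange _ _
    rw [hx i]
    calc _ ≤ |leaveOneOutMean (fun j => Br (x j) (β j)) i
            - leaveOneOutMean (fun j => Br z (β j)) i|
          + |leaveOneOutMean (fun j => Br z (β j)) i - 1 / n * ∑ j, Br z (β j)|
          + |1 / n * ∑ j, Br z (β j) - z| := by
            have := abs_sub_le (leaveOneOutMean (fun j => Br (x j) (β j)) i)
              (leaveOneOutMean (fun j => Br z (β j)) i) z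
            have := abs_sub_le (leaveOneOutMean (fun j => Br z (β j)) i)
              (1 / n * ∑ j, Br z (β j)) z
            linarith
      _ ≤ _ := by linarith
  rw [le_div_iff₀ (by linarith)]
  linarith

theorem equilibrium_means_tendsto_AEM_general
    (a b Lz L : ℝ) (Br : ℝ → ℝ → ℝ)
    (hrange : ∀ z α, Br z α ∈ Set.Icc a b)
    (hLz0 : 0 ≤ Lz) (hLz1 : Lz < 1) (hL0 : 0 ≤ L)
    (hLipz : ∀ z z' α, |Br z α - Br z' α| ≤ Lz * |z - z'|)
    (hLipα : ∀ z α α', |Br z α - Br z α'| ≤ L * |α - α'|)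
    (μ : Measure ℝ) [IsProbabilityMeasure μ]
    (α : ℕ → ℝ)
    (hconv : ∀ t : ℝ, Tendsto
      (fun n : ℕ => (1 / (n : ℝ)) * (((Finset.range n).filter (fun i => α i ≤ t)).card : ℝ))
      atTop (nhds ((μ (Set.Iic t)).toReal)))
    (zstar : (n : ℕ) → Fin n → ℝ)
    (hzstar : ∀ n, 2 ≤ n → ∀ i : Fin n, zstar n i =
      (1 / ((n : ℝ) - 1)) * ∑ j ∈ univ.erase i, Br (zstar n j) (α j))
    (zAEM : ℝ) (hzAEM : zAEM = ∫ x, Br zAEM x ∂μ) :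
    Tendsto (fun n : ℕ => ⨆ i : Fin n, |zstar n i - zAEM|) atTop (nhds 0) := by
  have hBr : UniformContinuous (Br zAEM) :=
    (LipschitzWith.of_dist_le_mul (K := ⟨L, hL0⟩) fun x y => by
      rw [Real.dist_eq, Real.dist_eq]; exact hLipα zAEM x y).uniformContinuous
  have hmean := tendsto_average_of_tendsto_empiricalCDF hconv
    (fun x => abs_le_max_abs_abs (hrange zAEM x).1 (hrange zAEM x).2) hBr
  rw [← hzAEM] at hmean
  have hbound : Tendsto (fun n : ℕ =>
      (|1 / n * ∑ j ∈ range n, Br zAEM (α j) - zAEM| + (b - a) / n) / (1 - Lz)) atTop (𝓝 0) := by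
    simpa using (((hmean.sub_const zAEM).abs).add
      (tendsto_const_div_atTop_nhds_zero_nat (b - a))).div_const (1 - Lz)
  refine squeeze_zero' (Eventually.of_forall fun n => Real.iSup_nonneg fun i => abs_nonneg _)
    ?_ hbound
  filter_upwards [eventually_ge_atTop 2] with n hn
  rw [← Fin.sum_univ_eq_sum_range (fun j => Br zAEM (α j))]
  exact iSup_abs_sub_le_of_eq_leaveOneOutMean hn hrange hLz0 hLz1 hLipz (hzstar n hn) zAEM

/-- Uniform convergence of the equilibrium mean variables to the asymptotic
equilibrium mean: `lim_n sup_i |z*ᵢ,ₙ − z*_AEM| = 0`. -/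
theorem equilibrium_means_tendsto_AEM
    (a b Lz L : ℝ) (Br : ℝ → ℝ → ℝ)
    (hrange : ∀ z α, Br z α ∈ Set.Icc a b)
    (hLz0 : 0 ≤ Lz) (hLz1 : Lz < 1) (hL0 : 0 ≤ L)
    (hLipz : ∀ z z' α, |Br z α - Br z' α| ≤ Lz * |z - z'|)
    (hLipα : ∀ z α α', |Br z α - Br z α'| ≤ L * |α - α'|)
    (μ : Measure ℝ) [IsProbabilityMeasure μ]
    (hmeas : ∀ z, Measurable (fun α => Br z α))
    (hPcont : Continuous (fun t => (μ (Set.Iic t)).toReal))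
    (α : ℕ → ℝ)
    (hconv : ∀ t : ℝ, Tendsto
      (fun n : ℕ => (1 / (n : ℝ)) * (((Finset.range n).filter (fun i => α i ≤ t)).card : ℝ))
      atTop (nhds ((μ (Set.Iic t)).toReal)))
    (zstar : (n : ℕ) → Fin n → ℝ)
    (hzstar : ∀ n, 2 ≤ n → ∀ i : Fin n, zstar n i =
      (1 / ((n : ℝ) - 1)) * ∑ j ∈ univ.erase i, Br (zstar n j) (α j))
    (zAEM : ℝ) (hzAEM : zAEM = ∫ x, Br zAEM x ∂μ) :
    Tendsto (fun n : ℕ => ⨆ i : Fin n, |zstar n i - zAEM|) atTop (nhds 0) :=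
  equilibrium_means_tendsto_AEM_general a b Lz L Br hrange hLz0 hLz1 hL0 hLipz hLipα μ α hconv zstar
    hzstar zAEM hzAEM
end

section
/- If the quantization map Q : ℝ → ℝ satisfies |x − Q(x)| ≤ δ/2 for all x (e.g., uniform quantization with cell width δ), then the Q-based AEM approximation ẑ satisfies |z* − ẑ| ≤ L·δ/(2(1−L_z)), where z* is the AEM. In particular, the approximation error tends to 0 as δ → 0. -/
open MeasureTheory

/-- If the quantization error is pointwise at most `δ/2`, then the `Q`-based AEM
approximation satisfies `|z* − ẑ| ≤ L·δ/(2(1−L_z))`. -/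
theorem uniform_quantization_AEM_error
    (a b Lz L δ : ℝ) (Br : ℝ → ℝ → ℝ)
    (hrange : ∀ z α, Br z α ∈ Set.Icc a b)
    (hLz0 : 0 ≤ Lz) (hLz1 : Lz < 1) (hL0 : 0 ≤ L) (hδ : 0 < δ)
    (hLipz : ∀ z z' α, |Br z α - Br z' α| ≤ Lz * |z - z'|)
    (hLipα : ∀ z α α', |Br z α - Br z α'| ≤ L * |α - α'|)
    (μ : Measure ℝ) [IsProbabilityMeasure μ]
    (hmeas : ∀ z, Measurable (fun α => Br z α))
    (Q : ℝ → ℝ) (hQmeas : Measurable Q)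
    (hQ : ∀ x, |x - Q x| ≤ δ / 2)
    (zstar zhat : ℝ)
    (hzstar : zstar = ∫ α, Br zstar α ∂μ)
    (hzhat : zhat = ∫ α, Br zhat (Q α) ∂μ) :
    |zstar - zhat| ≤ L * δ / (2 * (1 - Lz)) := by
  have hab : a ≤ b := by
    have := hrange 0 0
    exact le_trans this.1 this.2
  have hbound : ∀ z (f : ℝ → ℝ), Measurable f →
      Integrable (fun α => Br z (f α)) μ := by
    intro z f hf
    apply Integrable.mono' (integrable_const (max |a| |b|)) ((hmeas z).comp hf).aestronglyMeasurable
    filter_upwards with α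
    have h := hrange z (f α)
    rw [Real.norm_eq_abs, abs_le]
    constructor
    · calc -(max |a| |b|) ≤ -|a| := by simp
        _ ≤ a := neg_abs_le a
        _ ≤ Br z (f α) := h.1
    · calc Br z (f α) ≤ b := h.2
        _ ≤ |b| := le_abs_self b
        _ ≤ max |a| |b| := le_max_right _ _
  have hint1 : Integrable (fun α => Br zstar α) μ := hbound zstar id measurable_id
  have hint2 : Integrable (fun α => Br zhat (Q α)) μ := hbound zhat Q hQmeas
  have key : |zstar - zhat| ≤ Lz * |zstar - zhat| + L * (δ / 2) := by
    calc |zstar - zhat| = |∫ α, (Br zstar α - Br zhat (Q α)) ∂μ| := by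
          rw [integral_sub hint1 hint2, ← hzstar, ← hzhat]
      _ ≤ ∫ α, |Br zstar α - Br zhat (Q α)| ∂μ := by
          simpa using norm_integral_le_integral_norm (fun α => Br zstar α - Br zhat (Q α)) (μ := μ)
      _ ≤ ∫ _α, (Lz * |zstar - zhat| + L * (δ / 2)) ∂μ := by
          apply integral_mono_of_nonneg
          · filter_upwards with α; positivity
          · exact integrable_const _
          filter_upwards with α
          calc |Br zstar α - Br zhat (Q α)|
              ≤ |Br zstar α - Br zhat α| + |Br zhat α - Br zhat (Q α)| := abs_sub_le _ _ _
            _ ≤ Lz * |zstar - zhat| + L * |α - Q α| := add_le_add (hLipz _ _ _) (hLipα _ _ _)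
            _ ≤ Lz * |zstar - zhat| + L * (δ / 2) := by
                gcongr
                exact hQ α
      _ = Lz * |zstar - zhat| + L * (δ / 2) := by simp
  have h1 : (1 - Lz) * |zstar - zhat| ≤ L * (δ / 2) := by nlinarith [abs_nonneg (zstar - zhat)]
  have hpos : (0:ℝ) < 1 - Lz := by linarith
  rw [le_div_iff₀ (by positivity)]
  nlinarith [abs_nonneg (zstar - zhat)]
end
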